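/- Let Ω ⊂ ℝ^N (N ≥ 2) be a bounded open set, σ₊ > 0, and a* ∈ (0,1). Suppose v⁺ is continuous on the closure of Ω, twice continuously differentiable in Ω, satisfies −σ₊Δv⁺ + v⁺ = 1 in Ω, and v⁺ = a* on ∂Ω. Then a* < v⁺(x) < 1 for every x ∈ Ω. -/

import Mathlib

open Metric Set Filter Bornology
open scoped Topology NNReal RealInnerProductSpace

noncomputable section

abbrev EN (N : ℕ) := EuclideanSpace ℝ (Fin N)

/-- The `i`-th standard basis vector of `ℝ^N`. -/
noncomputable def basisVec {N : ℕ} (i : Fin N) : EN N := EuclideanSpace.single i 1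

/-- The Laplacian: the sum of the second partial derivatives. -/
noncomputable def lap {N : ℕ} (f : EN N → ℝ) (x : EN N) : ℝ :=
  ∑ i : Fin N, fderiv ℝ (fun y => fderiv ℝ f y (basisVec i)) x (basisVec i)

/-!
At an interior minimum of `v` the Laplacian is nonnegative, so the equation forces `v ≥ 1`
there; hence `v ≥ a` on `closure Ω`, and the value `a` cannot be attained inside `Ω`.

For the strict upper bound compare `v` with the barrier `φ y = ε * exp ⟪w, y⟫`, where
`σ ‖w‖² = 1`, which solves `σ Δφ = φ`: at an interior maximum of `v + φ` the two equations give
`v + φ ≤ 1`, and on the boundary `v + φ ≤ a + (1 - a)` for small `ε`. So `v ≤ 1 - φ < 1`.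
-/

open InnerProductSpace Laplacian

/- If `f'' x₀ < 0`, the second-derivative test makes `x₀` also a local maximum, so `f` is locally
constant and `f'' x₀ = 0`. -/
theorem IsLocalMin.deriv_deriv_nonneg {f : ℝ → ℝ} {x₀ : ℝ} (h : IsLocalMin f x₀)
    (hc : ContinuousAt f x₀) : 0 ≤ deriv (deriv f) x₀ := by
  by_contra! hneg
  have hconst : f =ᶠ[𝓝 x₀] fun _ => f x₀ := by
    filter_upwards [h, isLocalMax_of_deriv_deriv_neg hneg h.deriv_eq_zero hc] with y hmin hmax
    exact le_antisymm hmax hmin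
  have hderiv : deriv f =ᶠ[𝓝 x₀] fun _ => 0 := by
    filter_upwards [hconst.eventuallyEq_nhds] with y hy
    rw [hy.deriv_eq, deriv_const]
  rw [hderiv.deriv_eq, deriv_const] at hneg
  exact hneg.false

section SecondDerivative

variable {E : Type*} [NormedAddCommGroup E] [NormedSpace ℝ E] {u : E → ℝ} {x : E}

theorem deriv_deriv_comp_add_smul (hu : ContDiffAt ℝ 2 u x) (e : E) :
    deriv (deriv fun t : ℝ => u (x + t • e)) 0 = fderiv ℝ (fderiv ℝ u) x e e := by
  have hline (t : ℝ) : HasDerivAt (fun t : ℝ => x + t • e) e t := by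
    simpa using ((hasDerivAt_id t).smul_const e).const_add x
  have htendsto : Tendsto (fun t : ℝ => x + t • e) (𝓝 0) (𝓝 x) := by
    simpa using (hline 0).continuousAt.tendsto
  have hfirst : deriv (fun t : ℝ => u (x + t • e)) =ᶠ[𝓝 0]
      fun t => fderiv ℝ u (x + t • e) e := by
    filter_upwards [htendsto.eventually (hu.eventually (by simp))] with t ht
    exact ((ht.differentiableAt (by simp)).hasFDerivAt.comp_hasDerivAt t (hline t)).deriv
  have hD : DifferentiableAt ℝ (fderiv ℝ u) x :=
    (hu.fderiv_right (m := 1) le_rfl).differentiableAt one_ne_zero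
  rw [hfirst.deriv_eq]
  have hcomp : HasDerivAt (fun t : ℝ => fderiv ℝ u (x + t • e)) (fderiv ℝ (fderiv ℝ u) x e) 0 :=
    hD.hasFDerivAt.comp_hasDerivAt_of_eq 0 (hline 0) (by simp)
  exact (hcomp.clm_apply (hasDerivAt_const (0 : ℝ) e)).deriv.trans (by simp)

theorem IsLocalMin.fderiv_fderiv_apply_self_nonneg (h : IsLocalMin u x) (hu : ContDiffAt ℝ 2 u x)
    (e : E) : 0 ≤ fderiv ℝ (fderiv ℝ u) x e e := by
  rw [← deriv_deriv_comp_add_smul hu e]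
  have hline : Continuous fun t : ℝ => x + t • e := by fun_prop
  have hx : x + (0 : ℝ) • e = x := by simp
  refine IsLocalMin.deriv_deriv_nonneg ?_ ?_
  · exact IsLocalMin.comp_continuous (by rwa [hx]) hline.continuousAt
  · exact ContinuousAt.comp (by rw [hx]; exact hu.continuousAt) hline.continuousAt

end SecondDerivative

section Laplacian

variable {E : Type*} [NormedAddCommGroup E] [InnerProductSpace ℝ E] [FiniteDimensional ℝ E]
  {u : E → ℝ} {x : E}

theorem IsLocalMin.laplacian_nonneg (h : IsLocalMin u x) (hu : ContDiffAt ℝ 2 u x) :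
    0 ≤ Δ u x := by
  rw [laplacian_eq_iteratedFDeriv_stdOrthonormalBasis]
  exact Finset.sum_nonneg fun i _ => by
    simpa [iteratedFDeriv_two_apply] using h.fderiv_fderiv_apply_self_nonneg hu _

theorem IsLocalMax.laplacian_nonpos (h : IsLocalMax u x) (hu : ContDiffAt ℝ 2 u x) :
    Δ u x ≤ 0 := by
  have := h.neg.laplacian_nonneg hu.neg
  rw [show (fun y => -u y) = -u from rfl, laplacian_neg] at this
  simpa using this

theorem laplacian_comp_innerSL {g : ℝ → ℝ} (hg : ContDiff ℝ 2 g) (w x : E) :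
    Δ (g ∘ innerSL ℝ w) x = ‖w‖ ^ 2 * iteratedDeriv 2 g ⟪w, x⟫ := by
  rw [laplacian_eq_iteratedFDeriv_stdOrthonormalBasis]
  simp only [(innerSL ℝ w).iteratedFDeriv_comp_right hg x le_rfl,
    ContinuousMultilinearMap.compContinuousLinearMap_apply,
    iteratedFDeriv_apply_eq_iteratedDeriv_mul_prod]
  simp [Fin.prod_univ_two, ← Finset.sum_mul,
    ← (stdOrthonormalBasis ℝ E).sum_sq_norm_inner_left w, sq]

theorem exists_pos_smul_laplacian_eq_self [Nontrivial E] {σ δ : ℝ} (hσ : 0 < σ) (hδ : 0 < δ)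
    {S : Set E} (hS : IsBounded S) :
    ∃ φ : E → ℝ, ContDiff ℝ 2 φ ∧ (∀ y, 0 < φ y) ∧ (∀ y, σ * Δ φ y = φ y) ∧ ∀ y ∈ S, φ y ≤ δ := by
  obtain ⟨w, hw⟩ := exists_norm_eq E (inv_nonneg.2 (Real.sqrt_nonneg σ))
  obtain ⟨R, hR⟩ := isBounded_iff_forall_norm_le.1 hS
  set ε := δ / Real.exp (‖w‖ * R)
  have hε : 0 < ε := by positivity
  have hg : ContDiff ℝ 2 fun t => ε * Real.exp t := by fun_prop
  refine ⟨(fun t => ε * Real.exp t) ∘ innerSL ℝ w, hg.comp (innerSL ℝ w).contDiff,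
    fun y => mul_pos hε (Real.exp_pos _), fun y => ?_, fun y hy => ?_⟩
  · rw [laplacian_comp_innerSL hg, iteratedDeriv_const_mul_field, iteratedDeriv_eq_iterate,
      Real.iter_deriv_exp, hw, inv_pow, Real.sq_sqrt hσ.le, ← mul_assoc, mul_inv_cancel₀ hσ.ne',
      one_mul]
    rfl
  · have : ⟪w, y⟫ ≤ ‖w‖ * R :=
      (real_inner_le_norm w y).trans (mul_le_mul_of_nonneg_left (hR y hy) (norm_nonneg w))
    calc ε * Real.exp ⟪w, y⟫ ≤ ε * Real.exp (‖w‖ * R) := by gcongr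
      _ = δ := div_mul_cancel₀ δ (Real.exp_pos _).ne'

end Laplacian

theorem lap_eq_laplacian {N : ℕ} {f : EN N → ℝ} {x : EN N} (hf : ContDiffAt ℝ 2 f x) :
    lap f x = Δ f x := by
  have hD : DifferentiableAt ℝ (fderiv ℝ f) x :=
    (hf.fderiv_right (m := 1) le_rfl).differentiableAt one_ne_zero
  rw [laplacian_eq_iteratedFDeriv_orthonormalBasis f (EuclideanSpace.basisFun (Fin N) ℝ), lap]
  refine Finset.sum_congr rfl fun i _ => ?_
  simp [iteratedFDeriv_two_apply, fderiv_clm_apply hD (differentiableAt_const _), basisVec]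

section MaximumPrinciple

variable {X : Type*} [PseudoMetricSpace X] [ProperSpace X] {Ω : Set X} {f : X → ℝ} {c : ℝ}

theorem le_on_closure_of_isLocalMax_le (hΩo : IsOpen Ω) (hΩb : IsBounded Ω)
    (hf : ContinuousOn f (closure Ω)) (hint : ∀ z ∈ Ω, IsLocalMax f z → f z ≤ c)
    (hfr : ∀ z ∈ frontier Ω, f z ≤ c) {y : X} (hy : y ∈ closure Ω) : f y ≤ c := by
  obtain ⟨z, hz, hmax⟩ := hΩb.isCompact_closure.exists_isMaxOn ⟨y, hy⟩ hf
  refine (hmax hy).trans ?_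
  by_cases hzΩ : z ∈ Ω
  · exact hint z hzΩ (hmax.isLocalMax (mem_of_superset (hΩo.mem_nhds hzΩ) subset_closure))
  · exact hfr z (by rw [hΩo.frontier_eq]; exact ⟨hz, hzΩ⟩)

theorem le_on_closure_of_le_isLocalMin (hΩo : IsOpen Ω) (hΩb : IsBounded Ω)
    (hf : ContinuousOn f (closure Ω)) (hint : ∀ z ∈ Ω, IsLocalMin f z → c ≤ f z)
    (hfr : ∀ z ∈ frontier Ω, c ≤ f z) {y : X} (hy : y ∈ closure Ω) : c ≤ f y :=
  neg_le_neg_iff.1 <| le_on_closure_of_isLocalMax_le (f := -f) hΩo hΩb hf.neg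
    (fun z hz hmax => neg_le_neg (hint z hz (by simpa using hmax.neg)))
    (fun z hz => neg_le_neg (hfr z hz)) hy

end MaximumPrinciple

theorem stmt1_general (N : ℕ) (hN : 2 ≤ N) (Ω : Set (EN N)) (hΩo : IsOpen Ω) (hΩb : IsBounded Ω)
    (σp a : ℝ) (hσ : 0 < σp) (ha1 : a < 1) (v : EN N → ℝ)
    (hvc : ContinuousOn v (closure Ω)) (hv2 : ContDiffOn ℝ 2 v Ω)
    (hpde : ∀ x ∈ Ω, -σp * lap v x + v x = 1)
    (hbd : ∀ x ∈ frontier Ω, v x = a) :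
    ∀ x ∈ Ω, a < v x ∧ v x < 1 := by
  have hvAt : ∀ z ∈ Ω, ContDiffAt ℝ 2 v z := fun z hz => hv2.contDiffAt (hΩo.mem_nhds hz)
  have hlap : ∀ z ∈ Ω, σp * Δ v z = v z - 1 := fun z hz => by
    rw [← lap_eq_laplacian (hvAt z hz)]
    linarith [hpde z hz]
  have hmin : ∀ z ∈ Ω, IsLocalMin v z → 1 ≤ v z := fun z hz h => by
    linarith [hlap z hz, mul_nonneg hσ.le (h.laplacian_nonneg (hvAt z hz))]
  have hge : ∀ y ∈ closure Ω, a ≤ v y := fun y hy =>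
    le_on_closure_of_le_isLocalMin hΩo hΩb hvc (fun z hz h => ha1.le.trans (hmin z hz h))
      (fun z hz => (hbd z hz).ge) hy
  have : Nonempty (Fin N) := ⟨⟨0, by omega⟩⟩
  obtain ⟨φ, hφ2, hφpos, hφlap, hφle⟩ :=
    exists_pos_smul_laplacian_eq_self hσ (sub_pos.2 ha1) hΩb.closure
  have hle : ∀ y ∈ closure Ω, v y + φ y ≤ 1 := fun y hy =>
    le_on_closure_of_isLocalMax_le hΩo hΩb (hvc.add hφ2.continuous.continuousOn)
      (fun z hz h => by
        have := h.laplacian_nonpos ((hvAt z hz).add hφ2.contDiffAt)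
        rw [(hvAt z hz).laplacian_add hφ2.contDiffAt] at this
        rw [Pi.add_apply]
        linarith [hlap z hz, hφlap z, mul_le_mul_of_nonneg_left this hσ.le])
      (fun z hz => by
        rw [Pi.add_apply]
        linarith [hbd z hz, hφle z (frontier_subset_closure hz)]) hy
  intro x hx
  refine ⟨(hge x (subset_closure hx)).lt_of_ne fun hxa => ?_, ?_⟩
  · have hxmin : IsMinOn v (closure Ω) x := fun y hy => hxa ▸ hge y hy
    linarith [hmin x hx (hxmin.isLocalMin (mem_of_superset (hΩo.mem_nhds hx) subset_closure))]
  · linarith [hle x (subset_closure hx), hφpos x]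

theorem stmt1 (N : ℕ) (hN : 2 ≤ N) (Ω : Set (EN N)) (hΩo : IsOpen Ω) (hΩb : IsBounded Ω)
    (σp a : ℝ) (hσ : 0 < σp) (ha0 : 0 < a) (ha1 : a < 1) (v : EN N → ℝ)
    (hvc : ContinuousOn v (closure Ω)) (hv2 : ContDiffOn ℝ 2 v Ω)
    (hpde : ∀ x ∈ Ω, -σp * lap v x + v x = 1)
    (hbd : ∀ x ∈ frontier Ω, v x = a) :
    ∀ x ∈ Ω, a < v x ∧ v x < 1 :=
  stmt1_general N hN Ω hΩo hΩb σp a hσ ha1 v hvc hv2 hpde hbd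

end
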